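/- If g: (0,∞) → ℝ is completely monotone (i.e. g is C^∞ with (-1)^n g^{(n)}(λ) ≥ 0 for all n ≥ 0 and λ > 0) and g is not identically constant, then (-1)^n g^{(n)}(λ) > 0 strictly for every λ > 0 and every n ≥ 0. -/

import Mathlib

open Set Filter
open scoped Nat

section CMAux

lemma idw_open {f : ℝ → ℝ} {u : Set ℝ} (hu : IsOpen u) {x : ℝ} (hx : x ∈ u) (k : ℕ) :
    iteratedDerivWithin k f u x = iteratedDeriv k f x := by
  rw [iteratedDerivWithin_eq_iteratedFDerivWithin, iteratedDeriv_eq_iteratedFDeriv,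
    iteratedFDerivWithin_of_isOpen k hu hx]

lemma diffAt_iteratedDeriv {f : ℝ → ℝ} {u : Set ℝ} (hu : IsOpen u)
    (hf : ContDiffOn ℝ (⊤ : ℕ∞) f u) (k : ℕ) {x : ℝ} (hx : x ∈ u) :
    DifferentiableAt ℝ (iteratedDeriv k f) x := by
  have h1 : DifferentiableOn ℝ (iteratedDerivWithin k f u) u :=
    hf.differentiableOn_iteratedDerivWithin (by exact_mod_cast ENat.coe_lt_top k) hu.uniqueDiffOn
  have h2 : DifferentiableOn ℝ (iteratedDeriv k f) u :=
    h1.congr fun z hz => (idw_open hu hz k).symm |>.symm ▸ rfl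
  exact h2.differentiableAt (hu.mem_nhds hx)

lemma hasDerivAt_iteratedDeriv {f : ℝ → ℝ} {u : Set ℝ} (hu : IsOpen u)
    (hf : ContDiffOn ℝ (⊤ : ℕ∞) f u) (k : ℕ) {x : ℝ} (hx : x ∈ u) :
    HasDerivAt (iteratedDeriv k f) (iteratedDeriv (k+1) f x) x := by
  have h := (diffAt_iteratedDeriv hu hf k hx).hasDerivAt
  rwa [← iteratedDeriv_succ] at h

lemma idw_closed {f : ℝ → ℝ} {u : Set ℝ} (hu : IsOpen u) (hf : ContDiffOn ℝ (⊤ : ℕ∞) f u)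
    {a b : ℝ} (hab : a < b) (hsub : Icc a b ⊆ u) (k : ℕ) :
    ∀ z ∈ Icc a b, iteratedDerivWithin k f (Icc a b) z = iteratedDeriv k f z := by
  induction k with
  | zero => intro z hz; simp
  | succ k ih =>
    intro z hz
    rw [iteratedDerivWithin_succ]
    rw [derivWithin_congr ih (ih z hz)]
    exact ((hasDerivAt_iteratedDeriv hu hf k (hsub hz)).hasDerivWithinAt).derivWithin
      (uniqueDiffOn_Icc hab z hz)

lemma taylor_left {f : ℝ → ℝ} {u : Set ℝ} (hu : IsOpen u) (hf : ContDiffOn ℝ (⊤ : ℕ∞) f u)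
    {a b : ℝ} (hab : a < b) (hsub : Icc a b ⊆ u) (m : ℕ) :
    ∃ c ∈ Ioo a b, f b - ∑ k ∈ Finset.range (m+1),
        ((k ! : ℝ)⁻¹ * (b-a)^k) * iteratedDeriv k f a
      = iteratedDeriv (m+1) f c * (b-a)^(m+1) / (m+1)! := by
  have hC : ContDiffOn ℝ m f (Icc a b) := (hf.mono hsub).of_le (by exact_mod_cast le_top)
  have hD : DifferentiableOn ℝ (iteratedDerivWithin m f (Icc a b)) (Ioo a b) := by
    have h2 : DifferentiableOn ℝ (iteratedDeriv m f) (Ioo a b) := fun z hz =>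
      (diffAt_iteratedDeriv hu hf m (hsub (Ioo_subset_Icc_self hz))).differentiableWithinAt
    exact h2.congr fun z hz => idw_closed hu hf hab hsub m z (Ioo_subset_Icc_self hz)
  obtain ⟨c, hc, hEq⟩ := taylor_mean_remainder_lagrange hab.ne (by rwa [uIcc_of_le hab.le])
    (by rwa [uIcc_of_le hab.le, uIoo_of_le hab.le])
  rw [uIoo_of_le hab.le] at hc; rw [uIcc_of_le hab.le] at hEq
  refine ⟨c, hc, ?_⟩
  rw [taylor_within_apply] at hEq
  rw [idw_closed hu hf hab hsub (m+1) c (Ioo_subset_Icc_self hc)] at hEq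
  rw [← hEq]
  congr 1
  apply Finset.sum_congr rfl
  intro k hk
  rw [idw_closed hu hf hab hsub k a (left_mem_Icc.2 hab.le)]
  simp [smul_eq_mul]

lemma taylor_right {g : ℝ → ℝ} (hg : ContDiffOn ℝ (⊤ : ℕ∞) g (Ioi 0))
    {x y : ℝ} (hx : 0 < x) (hxy : x < y) (m : ℕ) :
    ∃ ξ ∈ Ioo x y, g x - ∑ k ∈ Finset.range (m+1),
        ((k ! : ℝ)⁻¹ * (y-x)^k) * ((-1)^k * iteratedDeriv k g y)
      = ((-1)^(m+1) * iteratedDeriv (m+1) g ξ) * (y-x)^(m+1) / (m+1)! := by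
  have hh : ContDiffOn ℝ (⊤ : ℕ∞) (fun t => g (-t)) (Iio 0) := by
    apply hg.comp (contDiff_neg.contDiffOn)
    intro t ht
    simpa using ht
  have hsub : Icc (-y) (-x) ⊆ Iio (0:ℝ) := fun z hz => lt_of_le_of_lt hz.2 (by linarith)
  obtain ⟨c, hc, hEq⟩ := taylor_left isOpen_Iio hh (by linarith : -y < -x) hsub m
  refine ⟨-c, ⟨by linarith [hc.1, hc.2], by linarith [hc.1, hc.2]⟩, ?_⟩
  simp only [iteratedDeriv_comp_neg, smul_eq_mul, neg_neg] at hEq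
  have h2 : -x - -y = y - x := by ring
  rw [h2] at hEq
  exact hEq

lemma iteratedDeriv_polynomial (n : ℕ) (p : Polynomial ℝ) :
    iteratedDeriv n (fun z => p.eval z) = fun z => (Polynomial.derivative^[n] p).eval z := by
  induction n generalizing p with
  | zero => simp
  | succ n ih =>
    rw [iteratedDeriv_succ']
    have h : deriv (fun z => p.eval z) = fun z => p.derivative.eval z :=
      funext fun z => Polynomial.deriv p
    rw [h, ih, ← Function.iterate_succ_apply]

lemma Fderiv {g : ℝ → ℝ} (hg : ContDiffOn ℝ (⊤ : ℕ∞) g (Ioi 0)) (n : ℕ) {x : ℝ} (hx : 0 < x) :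
    HasDerivAt (fun t => (-1:ℝ)^n * iteratedDeriv n g t)
      (-((-1:ℝ)^(n+1) * iteratedDeriv (n+1) g x)) x := by
  have h := (hasDerivAt_iteratedDeriv isOpen_Ioi hg n hx).const_mul ((-1:ℝ)^n)
  refine h.congr_deriv ?_
  rw [pow_succ]
  ring

lemma Fanti {g : ℝ → ℝ} (hg : ContDiffOn ℝ (⊤ : ℕ∞) g (Ioi 0))
    (hmon' : ∀ n x, 0 < x → 0 ≤ (-1:ℝ)^n * iteratedDeriv n g x) (n : ℕ) :
    AntitoneOn (fun t => (-1:ℝ)^n * iteratedDeriv n g t) (Ioi 0) := by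
  apply antitoneOn_of_deriv_nonpos (convex_Ioi 0)
  · exact fun x hx => (Fderiv hg n hx).differentiableAt.continuousAt.continuousWithinAt
  · rw [interior_Ioi]
    exact fun x hx => (Fderiv hg n hx).differentiableAt.differentiableWithinAt
  · rw [interior_Ioi]
    intro x hx
    rw [(Fderiv hg n hx).deriv]
    exact neg_nonpos.mpr (hmon' (n+1) x hx)

lemma Fbound {g : ℝ → ℝ} (hg : ContDiffOn ℝ (⊤ : ℕ∞) g (Ioi 0))
    (hmon' : ∀ n x, 0 < x → 0 ≤ (-1:ℝ)^n * iteratedDeriv n g x)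
    {a x : ℝ} (ha : 0 < a) (hax : a < x) (m : ℕ) :
    ((-1:ℝ)^m * iteratedDeriv m g x) * (x-a)^m ≤ g a * m ! := by
  have hx : (0:ℝ) < x := ha.trans hax
  cases m with
  | zero =>
    have h := Fanti hg hmon' 0 (mem_Ioi.2 ha) (mem_Ioi.2 hx) hax.le
    simpa using h
  | succ k =>
    obtain ⟨ξ, hξ, hEq⟩ := taylor_right hg ha hax k
    have hS : 0 ≤ ∑ j ∈ Finset.range (k+1),
        ((j ! : ℝ)⁻¹ * (x-a)^j) * ((-1)^j * iteratedDeriv j g x) := by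
      apply Finset.sum_nonneg
      intro j _
      have h1 : 0 ≤ (-1:ℝ)^j * iteratedDeriv j g x := hmon' j x hx
      have hxa : (0:ℝ) ≤ x - a := by linarith
      have h2 : (0:ℝ) ≤ (j ! : ℝ)⁻¹ * (x-a)^j :=
        mul_nonneg (by positivity) (pow_nonneg hxa j)
      exact mul_nonneg h2 h1
    have h1 : ((-1:ℝ)^(k+1) * iteratedDeriv (k+1) g ξ) * (x-a)^(k+1) / (k+1)! ≤ g a := by
      linarith
    have h2 : ((-1:ℝ)^(k+1) * iteratedDeriv (k+1) g x)
        ≤ ((-1:ℝ)^(k+1) * iteratedDeriv (k+1) g ξ) :=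
      Fanti hg hmon' (k+1) (mem_Ioi.2 (ha.trans hξ.1)) (mem_Ioi.2 hx) hξ.2.le
    have hfac : (0:ℝ) < (k+1)! := by positivity
    rw [div_le_iff₀ hfac] at h1
    have h3 : ((-1:ℝ)^(k+1) * iteratedDeriv (k+1) g x) * (x-a)^(k+1)
        ≤ ((-1:ℝ)^(k+1) * iteratedDeriv (k+1) g ξ) * (x-a)^(k+1) :=
      mul_le_mul_of_nonneg_right h2 (pow_nonneg (by linarith) (k+1))
    calc ((-1:ℝ)^(k+1) * iteratedDeriv (k+1) g x) * (x-a)^(k+1)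
        ≤ ((-1:ℝ)^(k+1) * iteratedDeriv (k+1) g ξ) * (x-a)^(k+1) := h3
      _ ≤ g a * (k+1)! := h1

lemma Fkey {g : ℝ → ℝ} (hg : ContDiffOn ℝ (⊤ : ℕ∞) g (Ioi 0))
    (hmon' : ∀ n x, 0 < x → 0 ≤ (-1:ℝ)^n * iteratedDeriv n g x)
    (n : ℕ) {x0 : ℝ} (hx0 : 0 < x0)
    (h0 : (-1:ℝ)^n * iteratedDeriv n g x0 = 0) :
    ∀ x, x0/2 < x → (-1:ℝ)^n * iteratedDeriv n g x = 0 := by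
  -- all higher derivatives vanish beyond x0
  have hup' : ∀ j, ∀ z, x0 < z → (-1:ℝ)^(n+j) * iteratedDeriv (n+j) g z = 0 := by
    intro j
    induction j with
    | zero =>
      intro z hz
      have h1 := Fanti hg hmon' n (mem_Ioi.2 hx0) (mem_Ioi.2 (hx0.trans hz)) hz.le
      have h2 := hmon' n z (hx0.trans hz)
      simpa using le_antisymm (by simpa [h0] using h1) h2
    | succ j ih =>
      intro z hz
      have hzpos : 0 < z := hx0.trans hz
      have hev : (fun t => (-1:ℝ)^(n+j) * iteratedDeriv (n+j) g t) =ᶠ[nhds z]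
          (fun _ => (0:ℝ)) :=
        eventually_of_mem (isOpen_Ioi.mem_nhds hz) (fun t ht => ih t ht)
      have hd := (Fderiv hg (n+j) hzpos).deriv
      rw [hev.deriv_eq] at hd
      simp only [deriv_const] at hd
      have h9 : (-1:ℝ)^(n+j+1) * iteratedDeriv (n+j+1) g z = 0 := by linarith
      exact h9
  have hup : ∀ k, n ≤ k → ∀ z, x0 < z → (-1:ℝ)^k * iteratedDeriv k g z = 0 := by
    intro k hk z hz
    have := hup' (k - n) z hz
    rwa [Nat.add_sub_cancel' hk] at this
  intro x hx
  have hxpos : 0 < x := (half_pos hx0).trans hx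
  set y := x0/2 + x with hy
  have hy0 : x0 < y := by simp [hy]; linarith
  have hxy : x < y := by simp [hy]; linarith
  have hypos : 0 < y := hx0.trans hy0
  -- polynomial identity on Ioo (y/2) y
  have hpoly : ∀ z ∈ Ioo (y/2) y, g z = ∑ k ∈ Finset.range n,
      ((k ! : ℝ)⁻¹ * (y-z)^k) * ((-1:ℝ)^k * iteratedDeriv k g y) := by
    intro z hz
    have hz0 : 0 < z := (half_pos hypos).trans hz.1
    set a := z - y/2 with ha
    have ha0 : 0 < a := by simp [ha]; linarith [hz.1]
    have haz : a < z := by simp [ha]; linarith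
    set r := (y - z)/(y/2) with hr
    have hr0 : 0 ≤ r := div_nonneg (by linarith [hz.2]) (by linarith)
    have hr1 : r < 1 := by
      rw [hr, div_lt_one (by linarith : (0:ℝ) < y/2)]
      linarith [hz.1]
    set P := ∑ k ∈ Finset.range n,
      ((k ! : ℝ)⁻¹ * (y-z)^k) * ((-1:ℝ)^k * iteratedDeriv k g y) with hP
    have hza : z - a = y/2 := by rw [ha]; ring
    have hyz : (y - z) = (y/2) * r := by
      rw [hr]; field_simp
    have hstep : ∀ m, n ≤ m+1 → 0 ≤ g z - P ∧ g z - P ≤ g a * r^(m+1) := by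
      intro m hm
      obtain ⟨ξ, hξ, hEq⟩ := taylor_right hg hz0 hz.2 m
      have hsum : ∑ k ∈ Finset.range (m+1),
          ((k ! : ℝ)⁻¹ * (y-z)^k) * ((-1:ℝ)^k * iteratedDeriv k g y) = P := by
        rw [hP]
        symm
        apply Finset.sum_subset (Finset.range_subset_range.mpr hm)
        intro k _ hk'
        rw [hup k (by simpa using hk') y hy0]
        ring
      rw [hsum] at hEq
      have hfac : (0:ℝ) < (m+1)! := by positivity
      have hyz0 : (0:ℝ) ≤ y - z := by linarith [hz.2]
      constructor
      · rw [hEq]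
        have h1 : 0 ≤ (-1:ℝ)^(m+1) * iteratedDeriv (m+1) g ξ :=
          hmon' (m+1) ξ (hz0.trans hξ.1)
        have := mul_nonneg h1 (pow_nonneg hyz0 (m+1))
        positivity
      · rw [hEq]
        have h2 : ((-1:ℝ)^(m+1) * iteratedDeriv (m+1) g ξ)
            ≤ ((-1:ℝ)^(m+1) * iteratedDeriv (m+1) g z) :=
          Fanti hg hmon' (m+1) (mem_Ioi.2 hz0) (mem_Ioi.2 (hz0.trans hξ.1)) hξ.1.le
        have hb := Fbound hg hmon' ha0 haz (m+1)
        rw [hza] at hb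
        have hpow : (y - z)^(m+1) = (y/2)^(m+1) * r^(m+1) := by
          rw [hyz, mul_pow]
        have hz2 : 0 ≤ (-1:ℝ)^(m+1) * iteratedDeriv (m+1) g z := hmon' (m+1) z hz0
        have h3 : ((-1:ℝ)^(m+1) * iteratedDeriv (m+1) g ξ) * (y-z)^(m+1)
            ≤ ((-1:ℝ)^(m+1) * iteratedDeriv (m+1) g z) * (y-z)^(m+1) :=
          mul_le_mul_of_nonneg_right h2 (pow_nonneg hyz0 (m+1))
        have h4 : ((-1:ℝ)^(m+1) * iteratedDeriv (m+1) g z) * (y-z)^(m+1)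
            ≤ (g a * (m+1)!) * r^(m+1) := by
          calc ((-1:ℝ)^(m+1) * iteratedDeriv (m+1) g z) * (y-z)^(m+1)
              = (((-1:ℝ)^(m+1) * iteratedDeriv (m+1) g z) * (y/2)^(m+1)) * r^(m+1) := by
                rw [hpow]; ring
            _ ≤ (g a * (m+1)!) * r^(m+1) :=
                mul_le_mul_of_nonneg_right hb (pow_nonneg hr0 (m+1))
        rw [div_le_iff₀ hfac]
        calc ((-1:ℝ)^(m+1) * iteratedDeriv (m+1) g ξ) * (y-z)^(m+1)
            ≤ (g a * (m+1)!) * r^(m+1) := le_trans h3 h4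
          _ = g a * r^(m+1) * (m+1)! := by ring
    -- pass to the limit
    by_contra hne
    have hpos : 0 < g z - P := by
      rcases lt_or_eq_of_le (hstep n (by omega)).1 with h | h
      · exact h
      · exact absurd (by linarith) hne
    have hga : 0 ≤ g a := by
      have := hmon' 0 a ha0
      simpa using this
    rcases eq_or_lt_of_le hga with hga0 | hga0
    · have := (hstep n (by omega)).2
      rw [← hga0] at this
      linarith
    · obtain ⟨N, hN⟩ := exists_pow_lt_of_lt_one (div_pos hpos hga0) hr1
      have hm : n ≤ (N + n) + 1 := by omega
      have h5 := (hstep (N + n) hm).2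
      have h6 : r^((N+n)+1) ≤ r^N := pow_le_pow_of_le_one hr0 hr1.le (by omega)
      have h7 : g a * r^((N+n)+1) ≤ g a * r^N :=
        mul_le_mul_of_nonneg_left h6 hga0.le
      have h8 : g a * r^N < g a * ((g z - P)/(g a)) :=
        mul_lt_mul_of_pos_left hN hga0
      rw [mul_div_cancel₀ _ (ne_of_gt hga0)] at h8
      linarith
  -- conclude
  have hx_mem : x ∈ Ioo (y/2) y := by
    constructor
    · simp only [hy]; linarith
    · exact hxy
  rcases Nat.eq_zero_or_pos n with hn | hn
  · subst hn
    have := hpoly x hx_mem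
    simpa using this
  · set p : Polynomial ℝ := ∑ k ∈ Finset.range n,
      Polynomial.C ((k !:ℝ)⁻¹ * ((-1:ℝ)^k * iteratedDeriv k g y))
        * (Polynomial.C y - Polynomial.X)^k with hp
    have hEqOn : Set.EqOn g (fun z => p.eval z) (Ioo (y/2) y) := by
      intro z hz
      rw [hpoly z hz]
      simp only [hp, Polynomial.eval_finset_sum, Polynomial.eval_mul, Polynomial.eval_pow,
        Polynomial.eval_sub, Polynomial.eval_C, Polynomial.eval_X]
      apply Finset.sum_congr rfl
      intro k _
      ring
    have h1 : iteratedDeriv n g x = iteratedDeriv n (fun z => p.eval z) x :=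
      hEqOn.iteratedDeriv_of_isOpen isOpen_Ioo n hx_mem
    have hdeg : p.natDegree < n := by
      have hle : p.natDegree ≤ n - 1 := by
        apply Polynomial.natDegree_sum_le_of_forall_le
        intro k hk
        calc (Polynomial.C ((k !:ℝ)⁻¹ * ((-1:ℝ)^k * iteratedDeriv k g y))
              * (Polynomial.C y - Polynomial.X)^k).natDegree
            ≤ ((Polynomial.C y - Polynomial.X)^k).natDegree :=
              Polynomial.natDegree_C_mul_le _ _
          _ ≤ k * (Polynomial.C y - Polynomial.X).natDegree := Polynomial.natDegree_pow_le
          _ ≤ k * 1 := by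
              apply Nat.mul_le_mul_left
              calc (Polynomial.C y - Polynomial.X).natDegree
                  ≤ max (Polynomial.C y).natDegree (Polynomial.X : Polynomial ℝ).natDegree :=
                    Polynomial.natDegree_sub_le _ _
                _ ≤ 1 := by simp
          _ ≤ n - 1 := by
              have := Finset.mem_range.1 hk
              omega
      omega
    have h2 : (Polynomial.derivative^[n] p) = 0 := Polynomial.iterate_derivative_eq_zero hdeg
    rw [h1, iteratedDeriv_polynomial, h2]
    simp

lemma const_of_deriv {f : ℝ → ℝ} (hd : ∀ x : ℝ, 0 < x → HasDerivAt f 0 x) :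
    ∀ x, 0 < x → f x = f 1 := by
  have hcont : ContinuousOn f (Ioi 0) :=
    fun x hx => ((hd x hx).differentiableAt).continuousAt.continuousWithinAt
  have hdiff : DifferentiableOn ℝ f (interior (Ioi 0)) := by
    rw [interior_Ioi]
    exact fun x hx => ((hd x hx).differentiableAt).differentiableWithinAt
  have hm : MonotoneOn f (Ioi 0) := by
    apply monotoneOn_of_deriv_nonneg (convex_Ioi 0) hcont hdiff
    rw [interior_Ioi]
    intro x hx
    rw [(hd x hx).deriv]
  have ha : AntitoneOn f (Ioi 0) := by
    apply antitoneOn_of_deriv_nonpos (convex_Ioi 0) hcont hdiff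
    rw [interior_Ioi]
    intro x hx
    rw [(hd x hx).deriv]
  intro x hx
  rcases le_total x 1 with h | h
  · exact le_antisymm (hm (mem_Ioi.2 hx) (mem_Ioi.2 one_pos) h)
      (ha (mem_Ioi.2 hx) (mem_Ioi.2 one_pos) h)
  · exact le_antisymm (ha (mem_Ioi.2 one_pos) (mem_Ioi.2 hx) h)
      (hm (mem_Ioi.2 one_pos) (mem_Ioi.2 hx) h)

lemma Fconst {g : ℝ → ℝ} (hg : ContDiffOn ℝ (⊤ : ℕ∞) g (Ioi 0))
    (hmon' : ∀ n x, 0 < x → 0 ≤ (-1:ℝ)^n * iteratedDeriv n g x) :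
    ∀ m : ℕ, (∀ x, 0 < x → (-1:ℝ)^m * iteratedDeriv m g x = 0) →
      ∃ c, ∀ x ∈ Ioi (0:ℝ), g x = c := by
  intro m
  induction m with
  | zero =>
    intro h
    exact ⟨0, fun x hx => by simpa using h x hx⟩
  | succ m ih =>
    intro h
    have hc : ∀ x, 0 < x →
        (-1:ℝ)^m * iteratedDeriv m g x = (-1:ℝ)^m * iteratedDeriv m g 1 := by
      apply const_of_deriv
      intro x hx
      have h1 := Fderiv hg m hx
      rwa [h x hx, neg_zero] at h1
    cases m with
    | zero =>
      refine ⟨iteratedDeriv 0 g 1, fun x hx => ?_⟩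
      have := hc x (mem_Ioi.1 hx)
      simpa using this
    | succ j =>
      have hczero : (-1:ℝ)^(j+1) * iteratedDeriv (j+1) g 1 = 0 := by
        set c := (-1:ℝ)^(j+1) * iteratedDeriv (j+1) g 1 with hcdef
        by_contra hne
        have hcpos : 0 < c := lt_of_le_of_ne (hmon' (j+1) 1 one_pos) (Ne.symm hne)
        have hφ : ∀ x, 0 < x →
            ((-1:ℝ)^j * iteratedDeriv j g x + c * x)
              = ((-1:ℝ)^j * iteratedDeriv j g 1 + c * 1) := by
          apply const_of_deriv (f := fun x => (-1:ℝ)^j * iteratedDeriv j g x + c * x)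
          intro x hx
          have h1 := (Fderiv hg j hx).add ((hasDerivAt_id x).const_mul c)
          have h2 : (-1:ℝ)^(j+1) * iteratedDeriv (j+1) g x = c := hc x hx
          have h3 : -((-1:ℝ)^(j+1) * iteratedDeriv (j+1) g x) + c * 1 = 0 := by
            rw [h2]; ring
          rwa [h3] at h1
        set K := (-1:ℝ)^j * iteratedDeriv j g 1 + c * 1 with hK
        have hxpos : 0 < (K + 1)/c := by
          have hj1 : 0 ≤ (-1:ℝ)^j * iteratedDeriv j g 1 := hmon' j 1 one_pos
          have hKpos : 0 < K + 1 := by rw [hK]; linarith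
          positivity
        have h4 := hφ ((K+1)/c) hxpos
        have h5 : c * ((K+1)/c) = K + 1 := by field_simp
        have h6 : 0 ≤ (-1:ℝ)^j * iteratedDeriv j g ((K+1)/c) := hmon' j _ hxpos
        rw [h5] at h4
        linarith
      apply ih
      intro x hx
      rw [hc x hx]
      exact hczero

end CMAux

theorem completely_monotone_strict (g : ℝ → ℝ)
    (hg : ContDiffOn ℝ (⊤ : ℕ∞) g (Set.Ioi 0))
    (hmon : ∀ (n : ℕ), ∀ x ∈ Set.Ioi (0:ℝ),
      0 ≤ (-1)^n * iteratedDerivWithin n g (Set.Ioi 0) x)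
    (hnc : ¬ ∃ c : ℝ, ∀ x ∈ Set.Ioi (0:ℝ), g x = c) :
    ∀ (n : ℕ), ∀ x ∈ Set.Ioi (0:ℝ),
      0 < (-1)^n * iteratedDerivWithin n g (Set.Ioi 0) x := by
  have hmon' : ∀ n x, 0 < x → 0 ≤ (-1:ℝ)^n * iteratedDeriv n g x := by
    intro n x hx
    have h := hmon n x (Set.mem_Ioi.2 hx)
    rwa [idw_open isOpen_Ioi (Set.mem_Ioi.2 hx) n] at h
  intro n x hx
  rw [idw_open isOpen_Ioi hx n]
  have hxpos : 0 < x := Set.mem_Ioi.1 hx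
  rcases (hmon' n x hxpos).lt_or_eq with h | h
  · exact h
  · exfalso
    have hj : ∀ j : ℕ, (-1:ℝ)^n * iteratedDeriv n g (x * (3/4)^j) = 0 := by
      intro j
      induction j with
      | zero => simpa using h.symm
      | succ j ihj =>
        have hp : 0 < x * (3/4:ℝ)^j := by positivity
        apply Fkey hg hmon' n hp ihj
        have h3 : (0:ℝ) < (3/4:ℝ)^j := by positivity
        rw [pow_succ]
        nlinarith
    have hall : ∀ z, 0 < z → (-1:ℝ)^n * iteratedDeriv n g z = 0 := by
      intro z hz
      obtain ⟨j, hjlt⟩ := exists_pow_lt_of_lt_one (show (0:ℝ) < 2*z/x by positivity)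
        (by norm_num : (3:ℝ)/4 < 1)
      have hp : 0 < x * (3/4:ℝ)^j := by positivity
      apply Fkey hg hmon' n hp (hj j)
      have h2 : x * (3/4:ℝ)^j < 2*z := by
        rw [lt_div_iff₀ hxpos] at hjlt
        nlinarith
      linarith
    obtain ⟨c, hcon⟩ := Fconst hg hmon' n hall
    exact hnc ⟨c, hcon⟩
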